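/- arXiv:1107.0453 — 6 statements merged into one kernel-verified Lean document; each statement's English description precedes it below -/
import Mathlib

section
/- Let T : A → B be a positive linear map between finite-dimensional C*-algebras. The following are equivalent: (i) T(ρ) is invertible for every positive invertible ρ ∈ A; (ii) T(ρ) is invertible for some positive invertible ρ ∈ A; (iii) the adjoint T* (with respect to the Hilbert–Schmidt inner product) is faithful, i.e., T*(a) = 0 for a ≥ 0 implies a = 0. -/
/-!
The adjoint relation turns the trace pairing `tr (T ρ * b)` into `tr (ρ * T* b)`. A positive
definite matrix pairs to zero under the trace only with the zero positive semidefinite matrix. So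
if `T ρ` is invertible (hence positive definite) and `T* b = 0`, then `b = 0`; conversely, if
`T ρ x = 0` for a positive definite `ρ`, the rank-one matrix `b = x x*` has
`tr (ρ * T* b) = x* (T ρ) x = 0`, hence `T* b = 0` and `x = 0` when `T*` is faithful. Here `T*` is
positive because `y* (T* b) y = tr (T (y y*) * b) ≥ 0`.
-/

open Matrix ComplexOrder

namespace Matrix

variable {𝕜 n : Type*} [RCLike 𝕜] [Fintype n]

theorem trace_mul_vecMulVec_star (M : Matrix n n 𝕜) (x : n → 𝕜) :
    (M * vecMulVec x (star x)).trace = star x ⬝ᵥ (M *ᵥ x) := by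
  rw [mul_vecMulVec, trace_vecMulVec, dotProduct_comm]

variable [DecidableEq n]

open scoped MatrixOrder in
theorem PosSemidef.trace_mul_nonneg {A B : Matrix n n 𝕜} (hA : A.PosSemidef)
    (hB : B.PosSemidef) : 0 ≤ (A * B).trace := by
  obtain ⟨C, rfl⟩ := CStarAlgebra.nonneg_iff_eq_star_mul_self.mp hB.nonneg
  rw [star_eq_conjTranspose, ← Matrix.mul_assoc, trace_mul_comm]
  simpa only [Matrix.mul_assoc] using (hA.mul_mul_conjTranspose_same C).trace_nonneg

open scoped MatrixOrder in
theorem PosDef.eq_zero_of_trace_mul_eq_zero {A B : Matrix n n 𝕜} (hA : A.PosDef)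
    (hB : B.PosSemidef) (h : (A * B).trace = 0) : B = 0 := by
  obtain ⟨D, hD, rfl⟩ := CStarAlgebra.isStrictlyPositive_iff_eq_star_mul_self.mp
    hA.isStrictlyPositive
  rw [star_eq_conjTranspose, Matrix.mul_assoc, trace_mul_comm,
    (hB.mul_mul_conjTranspose_same D).trace_eq_zero_iff] at h
  rwa [← star_eq_conjTranspose, hD.star.mul_left_eq_zero, hD.mul_right_eq_zero] at h

theorem posSemidef_of_forall_dotProduct_mulVec_nonneg {M : Matrix n n ℂ}
    (h : ∀ x, 0 ≤ star x ⬝ᵥ (M *ᵥ x)) : M.PosSemidef := by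
  refine .of_dotProduct_mulVec_nonneg ?_ h
  rw [← isSymmetric_toEuclideanLin_iff, LinearMap.isSymmetric_iff_inner_map_self_real]
  intro v
  have hinner : inner ℂ v (toEuclideanLin M v) = star v.ofLp ⬝ᵥ (M *ᵥ v.ofLp) := by
    simp [EuclideanSpace.inner_eq_star_dotProduct, dotProduct_comm]
  rw [← inner_conj_symm, hinner]
  exact congrArg (starRingEnd ℂ) (h _).isSelfAdjoint

end Matrix

section Adjoint

variable {𝕜 n m : Type*} [RCLike 𝕜] [Fintype n] [Fintype m]
  {T : Matrix n n 𝕜 →ₗ[𝕜] Matrix m m 𝕜} {Tstar : Matrix m m 𝕜 →ₗ[𝕜] Matrix n n 𝕜}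

theorem trace_apply_mul_eq_trace_mul_adjoint
    (hadj : ∀ a b, ((T a)ᴴ * b).trace = (aᴴ * Tstar b).trace) {a : Matrix n n 𝕜}
    (ha : a.IsHermitian) (hTa : (T a).IsHermitian) (b : Matrix m m 𝕜) :
    (T a * b).trace = (a * Tstar b).trace := by
  simpa only [ha.eq, hTa.eq] using hadj a b

variable [DecidableEq m]

theorem eq_zero_of_adjoint_apply_eq_zero
    (hpos : ∀ a, a.PosSemidef → (T a).PosSemidef)
    (hadj : ∀ a b, ((T a)ᴴ * b).trace = (aᴴ * Tstar b).trace) {ρ : Matrix n n 𝕜}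
    (hρ : ρ.PosDef) (hTρ : IsUnit (T ρ)) {b : Matrix m m 𝕜} (hb : b.PosSemidef)
    (hTb : Tstar b = 0) : b = 0 := by
  have hTρ_psd := hpos ρ hρ.posSemidef
  refine (hTρ_psd.posDef_iff_isUnit.mpr hTρ).eq_zero_of_trace_mul_eq_zero hb ?_
  rw [trace_apply_mul_eq_trace_mul_adjoint hadj hρ.isHermitian hTρ_psd.isHermitian, hTb,
    Matrix.mul_zero, trace_zero]

variable [DecidableEq n]

theorem isUnit_apply_of_posDef
    (hpos : ∀ a, a.PosSemidef → (T a).PosSemidef)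
    (hpos_adj : ∀ b, b.PosSemidef → (Tstar b).PosSemidef)
    (hadj : ∀ a b, ((T a)ᴴ * b).trace = (aᴴ * Tstar b).trace)
    (hfaithful : ∀ b, b.PosSemidef → Tstar b = 0 → b = 0) {ρ : Matrix n n 𝕜}
    (hρ : ρ.PosDef) : IsUnit (T ρ) := by
  have hTρ := hpos ρ hρ.posSemidef
  refine (PosDef.of_dotProduct_mulVec_pos hTρ.isHermitian fun x hx => ?_).isUnit
  refine (hTρ.dotProduct_mulVec_nonneg x).lt_of_ne' fun hzero => hx ?_
  have hb := posSemidef_vecMulVec_self_star x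
  have htrace : (ρ * Tstar (vecMulVec x (star x))).trace = 0 := by
    rw [← trace_apply_mul_eq_trace_mul_adjoint hadj hρ.isHermitian hTρ.isHermitian,
      trace_mul_vecMulVec_star, hzero]
  have hTb := hρ.eq_zero_of_trace_mul_eq_zero (hpos_adj _ hb) htrace
  simpa using congrArg trace (hfaithful _ hb hTb)

end Adjoint

theorem posSemidef_adjoint_apply {n m : Type*} [Fintype n] [DecidableEq n] [Fintype m]
    [DecidableEq m] {T : Matrix n n ℂ →ₗ[ℂ] Matrix m m ℂ}
    {Tstar : Matrix m m ℂ →ₗ[ℂ] Matrix n n ℂ} (hpos : ∀ a, a.PosSemidef → (T a).PosSemidef)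
    (hadj : ∀ a b, ((T a)ᴴ * b).trace = (aᴴ * Tstar b).trace) {b : Matrix m m ℂ}
    (hb : b.PosSemidef) : (Tstar b).PosSemidef := by
  refine posSemidef_of_forall_dotProduct_mulVec_nonneg fun x => ?_
  have hx := posSemidef_vecMulVec_self_star x
  rw [← trace_mul_vecMulVec_star, trace_mul_comm,
    ← trace_apply_mul_eq_trace_mul_adjoint hadj hx.isHermitian (hpos _ hx).isHermitian]
  exact (hpos _ hx).trace_mul_nonneg hb

/-- For a positive linear map `T` between matrix algebras with
Hilbert–Schmidt adjoint `Tstar`, the following are equivalent: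
(i) `T ρ` is invertible for every positive invertible `ρ`;
(ii) `T ρ` is invertible for some positive invertible `ρ`;
(iii) `Tstar` is faithful. -/
theorem stmt0 {n m : Type*} [Fintype n] [DecidableEq n] [Fintype m] [DecidableEq m]
    (T : Matrix n n ℂ →ₗ[ℂ] Matrix m m ℂ) (Tstar : Matrix m m ℂ →ₗ[ℂ] Matrix n n ℂ)
    (hpos : ∀ a : Matrix n n ℂ, a.PosSemidef → (T a).PosSemidef)
    (hadj : ∀ (a : Matrix n n ℂ) (b : Matrix m m ℂ),
      ((T a)ᴴ * b).trace = (aᴴ * Tstar b).trace) :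
    ((∀ ρ : Matrix n n ℂ, ρ.PosDef → IsUnit (T ρ)) ↔
      (∀ b : Matrix m m ℂ, b.PosSemidef → Tstar b = 0 → b = 0)) ∧
    ((∃ ρ : Matrix n n ℂ, ρ.PosDef ∧ IsUnit (T ρ)) ↔
      (∀ b : Matrix m m ℂ, b.PosSemidef → Tstar b = 0 → b = 0)) := by
  have faithful_of_exists : (∃ ρ : Matrix n n ℂ, ρ.PosDef ∧ IsUnit (T ρ)) →
      ∀ b : Matrix m m ℂ, b.PosSemidef → Tstar b = 0 → b = 0 :=
    fun ⟨_, hρ, hTρ⟩ _ => eq_zero_of_adjoint_apply_eq_zero hpos hadj hρ hTρ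
  have isUnit_of_faithful (hfaithful : ∀ b : Matrix m m ℂ, b.PosSemidef → Tstar b = 0 → b = 0)
      (ρ : Matrix n n ℂ) (hρ : ρ.PosDef) : IsUnit (T ρ) :=
    isUnit_apply_of_posDef hpos (fun _ => posSemidef_adjoint_apply hpos hadj) hadj hfaithful hρ
  exact ⟨⟨fun h => faithful_of_exists ⟨1, .one, h 1 .one⟩, isUnit_of_faithful⟩,
    ⟨faithful_of_exists, fun h => ⟨1, .one, isUnit_of_faithful h 1 .one⟩⟩⟩
end

section
/- Let a, b, c be n×n complex matrices with a, c Hermitian. The 2×2 block matrix M = [[a, b],[b*, c]] is positive semidefinite if and only if c ≥ 0, the limit b(c + εI)⁻¹b* as ε → 0⁺ exists (equivalently the range of b* is contained in the range of c, so bc⁻b* with c⁻ the generalized inverse is defined), and a ≥ b c⁻ b*. -/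
/-! For `c ≥ 0` and `ε > 0` the matrix `c + ε` is positive definite, so the Schur complement
criterion gives `[[a, b], [bᴴ, c + ε]] ≥ 0 ↔ a ≥ b (c + ε)⁻¹ bᴴ`. Diagonalising `c = U d Uᴴ`,
`b (c + ε)⁻¹ bᴴ = ∑ₖ (dₖ + ε)⁻¹ (bUₖ)(bUₖ)ᴴ`, which decreases as `ε` grows.

If `M ≥ 0`, a vector `(0, v)` with `c v = 0` is isotropic for `M`, hence in its kernel, so
`b v = 0`; thus the columns `bUₖ` with `dₖ = 0` vanish and the limit exists. Adding `ε` to the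
corner keeps `M` positive, and `a ≥ L` follows because the positive cone is closed. Conversely,
monotonicity gives `b (c + ε)⁻¹ bᴴ ≤ L ≤ a`, so every regularised block matrix is positive, and
so is their limit `M`. -/

open Matrix ComplexOrder Filter Topology Set

namespace Matrix

variable {𝕜 l m n o : Type*} [RCLike 𝕜]

section Blocks

variable [DecidableEq o]

theorem fromBlocks_add_smul_one (A : Matrix l m 𝕜) (B : Matrix l o 𝕜) (C : Matrix o m 𝕜)
    (D : Matrix o o 𝕜) (ε : 𝕜) :
    fromBlocks A B C (D + ε • 1) = fromBlocks A B C D + ε • fromBlocks 0 0 0 1 := by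
  simp [fromBlocks_smul, fromBlocks_add]

theorem tendsto_fromBlocks_add_smul_one (A : Matrix l m 𝕜) (B : Matrix l o 𝕜)
    (C : Matrix o m 𝕜) (D : Matrix o o 𝕜) :
    Tendsto (fun ε : ℝ => fromBlocks A B C (D + (ε : 𝕜) • 1)) (𝓝 0) (𝓝 (fromBlocks A B C D)) := by
  simp_rw [fromBlocks_add_smul_one]
  have hcont : Continuous fun ε : ℝ => fromBlocks A B C D + (ε : 𝕜) • fromBlocks 0 0 0 1 := by
    fun_prop
  simpa using hcont.tendsto 0

theorem posSemidef_fromBlocks_zero_one [DecidableEq m] :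
    (fromBlocks 0 0 0 1 : Matrix (m ⊕ o) (m ⊕ o) 𝕜).PosSemidef := by
  rw [← diagonal_zero, ← diagonal_one, fromBlocks_diagonal, posSemidef_diagonal_iff]
  rintro (i | i) <;> simp

end Blocks

section Finite

variable [Fintype m] [Fintype n]

theorem isClosed_setOf_posSemidef : IsClosed {A : Matrix n n 𝕜 | A.PosSemidef} := by
  simp only [posSemidef_iff_dotProduct_mulVec, Set.ofPred_and, Set.ofPred_forall]
  exact (isClosed_eq continuous_star continuous_id).inter
    (isClosed_iInter fun x => isClosed_le continuous_const (by fun_prop))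

theorem PosSemidef.mulVec_eq_zero_of_fromBlocks {A : Matrix m m 𝕜} {B : Matrix m n 𝕜}
    {C : Matrix n m 𝕜} {D : Matrix n n 𝕜} (hM : (fromBlocks A B C D).PosSemidef) {v : n → 𝕜}
    (hv : D *ᵥ v = 0) : B *ᵥ v = 0 := by
  have hz : star (Sum.elim 0 v) ⬝ᵥ (fromBlocks A B C D *ᵥ Sum.elim 0 v) = 0 := by
    simp [fromBlocks_mulVec, hv, Function.star_sumElim]
  funext i
  simpa [fromBlocks_mulVec] using congr_fun ((hM.dotProduct_mulVec_zero_iff _).1 hz) (Sum.inl i)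

omit [Fintype m] [Fintype n] in
theorem PosSemidef.of_fromBlocks₂₂ {A : Matrix m m 𝕜} {B : Matrix m n 𝕜} {C : Matrix n m 𝕜}
    {D : Matrix n n 𝕜} (hM : (fromBlocks A B C D).PosSemidef) : D.PosSemidef := by
  convert hM.submatrix Sum.inr
  ext; rfl

variable [DecidableEq n]

omit [Fintype m] in
theorem mul_diagonal_mul_conjTranspose_apply (V : Matrix m n 𝕜) (f : n → 𝕜) (i j : m) :
    (V * diagonal f * Vᴴ) i j = ∑ k, V i k * f k * star (V j k) := by
  rw [mul_apply]
  simp only [mul_diagonal, conjTranspose_apply]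

theorem inv_unitary_mul_diagonal_mul_conjTranspose {U : Matrix n n 𝕜}
    (hU : U ∈ unitaryGroup n 𝕜) {g : n → 𝕜} (hg : ∀ k, g k ≠ 0) :
    (U * diagonal g * Uᴴ)⁻¹ = U * diagonal g⁻¹ * Uᴴ := by
  rw [← star_eq_conjTranspose]
  refine inv_eq_left_inv ?_
  have hg' : diagonal g⁻¹ * diagonal g = 1 := by
    rw [diagonal_mul_diagonal, ← diagonal_one]
    exact congrArg diagonal (funext fun k => inv_mul_cancel₀ (hg k))
  calc U * diagonal g⁻¹ * star U * (U * diagonal g * star U)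
      = U * (diagonal g⁻¹ * (star U * U) * diagonal g) * star U := by noncomm_ring
    _ = 1 := by
      rw [(mem_unitaryGroup_iff').1 hU, mul_one, hg', mul_one, (mem_unitaryGroup_iff).1 hU]

omit [Fintype n] in
theorem PosSemidef.posDef_add_smul_one {c : Matrix n n 𝕜} (hc : c.PosSemidef) {ε : ℝ}
    (hε : 0 < ε) : (c + (ε : 𝕜) • 1).PosDef :=
  PosDef.posSemidef_add hc (PosDef.one.smul (RCLike.ofReal_pos.2 hε))

theorem PosSemidef.posSemidef_fromBlocks_add_smul_one_iff {c : Matrix n n 𝕜}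
    (hc : c.PosSemidef) (a : Matrix m m 𝕜) (b : Matrix m n 𝕜) {ε : ℝ} (hε : 0 < ε) :
    (fromBlocks a b bᴴ (c + (ε : 𝕜) • 1)).PosSemidef ↔
      (a - b * (c + (ε : 𝕜) • 1)⁻¹ * bᴴ).PosSemidef :=
  letI := (hc.posDef_add_smul_one hε).isUnit.invertible
  PosDef.fromBlocks₂₂ a b (hc.posDef_add_smul_one hε)

namespace IsHermitian

variable {c : Matrix n n 𝕜} (hc : c.IsHermitian)
include hc

local notation "U" => (hc.eigenvectorUnitary : Matrix n n 𝕜)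

omit [Fintype m] in
theorem add_smul_one_eq (ε : ℝ) :
    c + (ε : 𝕜) • 1 = U * diagonal (fun k => ((hc.eigenvalues k + ε : ℝ) : 𝕜)) * Uᴴ := by
  have hUU : U * Uᴴ = 1 := (mem_unitaryGroup_iff).1 hc.eigenvectorUnitary.2
  have hD : diagonal (fun k => ((hc.eigenvalues k + ε : ℝ) : 𝕜)) =
      diagonal (RCLike.ofReal ∘ hc.eigenvalues) + (ε : 𝕜) • 1 := by
    rw [smul_one_eq_diagonal, diagonal_add]
    congr 1
    funext k
    simp
  nth_rw 1 [hc.spectral_theorem]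
  rw [Unitary.conjStarAlgAut_apply, star_eq_conjTranspose, hD, mul_add, add_mul, mul_smul_comm,
    mul_one, smul_mul_assoc, hUU]

omit [Fintype m] in
theorem inv_add_smul_one_eq {ε : ℝ} (hε : ∀ k, hc.eigenvalues k + ε ≠ 0) :
    (c + (ε : 𝕜) • 1)⁻¹ =
      U * diagonal (fun k => (((hc.eigenvalues k + ε)⁻¹ : ℝ) : 𝕜)) * Uᴴ := by
  rw [hc.add_smul_one_eq, inv_unitary_mul_diagonal_mul_conjTranspose hc.eigenvectorUnitary.2
    fun k => RCLike.ofReal_ne_zero.2 (hε k)]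
  congr 3
  funext k
  simp

omit [Fintype m] in
theorem mul_inv_add_smul_one_mul_conjTranspose_eq (b : Matrix m n 𝕜) {ε : ℝ}
    (hε : ∀ k, hc.eigenvalues k + ε ≠ 0) :
    b * (c + (ε : 𝕜) • 1)⁻¹ * bᴴ =
      (b * U) * diagonal (fun k => (((hc.eigenvalues k + ε)⁻¹ : ℝ) : 𝕜)) * (b * U)ᴴ := by
  rw [hc.inv_add_smul_one_eq hε, conjTranspose_mul]
  simp only [Matrix.mul_assoc]

omit [Fintype m] in
theorem mul_eigenvectorUnitary_apply_eq_zero {b : Matrix m n 𝕜}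
    (hker : ∀ v, c *ᵥ v = 0 → b *ᵥ v = 0) (i : m) {k : n} (hk : hc.eigenvalues k = 0) :
    (b * U) i k = 0 := by
  have hv : c *ᵥ ⇑(hc.eigenvectorBasis k) = 0 := by
    rw [hc.mulVec_eigenvectorBasis, hk, zero_smul]
  have hbv := congr_fun (hker _ hv) i
  rwa [← eigenvectorUnitary_mulVec, mulVec_mulVec, mulVec_single_one] at hbv

end IsHermitian

namespace PosSemidef

variable {c : Matrix n n 𝕜} (hc : c.PosSemidef)
include hc

local notation "U" => (hc.isHermitian.eigenvectorUnitary : Matrix n n 𝕜)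

omit [Fintype m] in
theorem eigenvalues_add_ne_zero {ε : ℝ} (hε : 0 < ε) (k : n) :
    hc.isHermitian.eigenvalues k + ε ≠ 0 :=
  (add_pos_of_nonneg_of_pos (hc.eigenvalues_nonneg k) hε).ne'

theorem posSemidef_mul_inv_add_smul_one_mul_conjTranspose_sub (b : Matrix m n 𝕜) {δ ε : ℝ}
    (hδ : 0 < δ) (hδε : δ ≤ ε) :
    (b * (c + (δ : 𝕜) • 1)⁻¹ * bᴴ - b * (c + (ε : 𝕜) • 1)⁻¹ * bᴴ).PosSemidef := by
  rw [hc.isHermitian.mul_inv_add_smul_one_mul_conjTranspose_eq b (hc.eigenvalues_add_ne_zero hδ),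
    hc.isHermitian.mul_inv_add_smul_one_mul_conjTranspose_eq b
      (hc.eigenvalues_add_ne_zero (hδ.trans_le hδε)),
    ← Matrix.sub_mul, ← Matrix.mul_sub, diagonal_sub]
  refine PosSemidef.mul_mul_conjTranspose_same (posSemidef_diagonal_iff.2 fun k => ?_) _
  have hk := add_pos_of_nonneg_of_pos (hc.eigenvalues_nonneg k) hδ
  rw [← RCLike.ofReal_sub, RCLike.ofReal_nonneg, sub_nonneg]
  exact inv_anti₀ hk (by linarith)

theorem posSemidef_sub_of_tendsto {b : Matrix m n 𝕜} {L : Matrix m m 𝕜}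
    (hL : Tendsto (fun ε : ℝ => b * (c + (ε : 𝕜) • 1)⁻¹ * bᴴ) (𝓝[>] 0) (𝓝 L)) {ε : ℝ}
    (hε : 0 < ε) : (L - b * (c + (ε : 𝕜) • 1)⁻¹ * bᴴ).PosSemidef :=
  isClosed_setOf_posSemidef.mem_of_tendsto (hL.sub_const _) <| by
    filter_upwards [Ioc_mem_nhdsGT hε] with δ hδ
    exact hc.posSemidef_mul_inv_add_smul_one_mul_conjTranspose_sub b hδ.1 hδ.2

omit [Fintype m] in
/-- Since `0⁻¹ = 0`, the limit is `b c⁺ bᴴ` with `c⁺ = U d⁻¹ Uᴴ` the Moore–Penrose inverse. -/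
theorem tendsto_mul_inv_add_smul_one_mul_conjTranspose {b : Matrix m n 𝕜}
    (hker : ∀ v, c *ᵥ v = 0 → b *ᵥ v = 0) :
    Tendsto (fun ε : ℝ => b * (c + (ε : 𝕜) • 1)⁻¹ * bᴴ) (𝓝[>] 0)
      (𝓝 ((b * U) * diagonal (fun k => (((hc.isHermitian.eigenvalues k)⁻¹ : ℝ) : 𝕜))
        * (b * U)ᴴ)) := by
  refine Tendsto.congr' (eventually_nhdsWithin_of_forall fun ε (hε : 0 < ε) =>
    (hc.isHermitian.mul_inv_add_smul_one_mul_conjTranspose_eq b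
      (hc.eigenvalues_add_ne_zero hε)).symm) ?_
  refine tendsto_pi_nhds.2 fun i => tendsto_pi_nhds.2 fun j => ?_
  simp only [mul_diagonal_mul_conjTranspose_apply]
  refine tendsto_finsetSum _ fun k _ => ?_
  by_cases hk : hc.isHermitian.eigenvalues k = 0
  · simp [hc.isHermitian.mul_eigenvectorUnitary_apply_eq_zero hker i hk]
  · have hinv : Tendsto (fun ε : ℝ => (hc.isHermitian.eigenvalues k + ε)⁻¹) (𝓝[>] 0)
        (𝓝 (hc.isHermitian.eigenvalues k)⁻¹) := by
      refine tendsto_nhdsWithin_of_tendsto_nhds ?_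
      simpa using ((continuous_const_add (hc.isHermitian.eigenvalues k)).tendsto 0).inv₀
        (by simpa using hk)
    exact ((RCLike.continuous_ofReal.tendsto _).comp hinv).const_mul _ |>.mul_const _

end PosSemidef

end Finite

end Matrix

theorem stmt5_general {N : Type*} [Fintype N] [DecidableEq N]
    (a b c : Matrix N N ℂ) :
    (Matrix.fromBlocks a b bᴴ c).PosSemidef ↔
      (c.PosSemidef ∧ ∃ L : Matrix N N ℂ,
        Filter.Tendsto (fun ε : ℝ => b * (c + (ε : ℂ) • 1)⁻¹ * bᴴ)
          (nhdsWithin 0 (Set.Ioi 0)) (nhds L) ∧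
        (a - L).PosSemidef) := by
  constructor
  · intro hM
    have hc : c.PosSemidef := hM.of_fromBlocks₂₂
    have hX := hc.tendsto_mul_inv_add_smul_one_mul_conjTranspose fun v hv =>
      hM.mulVec_eq_zero_of_fromBlocks hv
    refine ⟨hc, _, hX, isClosed_setOf_posSemidef.mem_of_tendsto (hX.const_sub a) ?_⟩
    filter_upwards [self_mem_nhdsWithin] with ε (hε : 0 < ε)
    rw [← hc.posSemidef_fromBlocks_add_smul_one_iff a b hε, fromBlocks_add_smul_one]
    exact hM.add (posSemidef_fromBlocks_zero_one.smul (RCLike.ofReal_nonneg.2 hε.le))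
  · rintro ⟨hc, L, hL, haL⟩
    refine isClosed_setOf_posSemidef.mem_of_tendsto
      ((tendsto_fromBlocks_add_smul_one a b bᴴ c).mono_left (nhdsWithin_le_nhds (s := Ioi 0))) ?_
    filter_upwards [self_mem_nhdsWithin] with ε (hε : 0 < ε)
    rw [hc.posSemidef_fromBlocks_add_smul_one_iff a b hε, ← sub_add_sub_cancel a L]
    exact haL.add (hc.posSemidef_sub_of_tendsto hL hε)

/-- The block matrix `[[a, b], [bᴴ, c]]` (with `a`, `c` Hermitian)
is positive semidefinite iff `c ≥ 0`, the limit `L` of `b (c + ε•1)⁻¹ bᴴ` as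
`ε → 0⁺` exists (this limit is `b c⁻ bᴴ` for the generalized inverse `c⁻`),
and `a ≥ L` in the Loewner order. -/
theorem stmt5 {N : Type*} [Fintype N] [DecidableEq N]
    (a b c : Matrix N N ℂ) (ha : a.IsHermitian) (hc : c.IsHermitian) :
    (Matrix.fromBlocks a b bᴴ c).PosSemidef ↔
      (c.PosSemidef ∧ ∃ L : Matrix N N ℂ,
        Filter.Tendsto (fun ε : ℝ => b * (c + (ε : ℂ) • 1)⁻¹ * bᴴ)
          (nhdsWithin 0 (Set.Ioi 0)) (nhds L) ∧
        (a - L).PosSemidef) :=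
  stmt5_general a b c
end

section
/- Let T : A → B be a positive trace-preserving linear map and ρ ∈ A an invertible density operator. Define T_ρ(b) = T(ρ)^{-1/2} T(ρ^{1/2} b ρ^{1/2}) T(ρ)^{-1/2} (using generalized inverses on the support of T(ρ)). Then T_ρ satisfies the Schwarz inequality T_ρ(b*b) ≥ T_ρ(b)* T_ρ(b) for all b if and only if T satisfies the generalized Schwarz inequality for c = ρ, i.e., T(a* ρ⁻¹ a) ≥ T(a)* T(ρ)⁻¹ T(a) for all a ∈ A. -/
/-!
Write `r = ρ^{1/2}`, `s = T(ρ)^{1/2}` and `a = r b r`. Then `b* b` is sent to `r b* b r = a* ρ⁻¹ a`,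
so the Schwarz defect `Tρ(b* b) - Tρ(b)* Tρ(b)` equals `s⁻¹ (T(a* ρ⁻¹ a) - T(a)* T(ρ)⁻¹ T(a)) s⁻¹`.
Congruence by the invertible Hermitian `s⁻¹` preserves positivity in both directions, and
`b ↦ r b r` is a bijection, so the two families of inequalities are equivalent.
-/

open Matrix ComplexOrder

noncomputable def Matrix.PosSemidef.sqrt {𝕜 : Type*} [RCLike 𝕜] {n : Type*} [Fintype n]
    [DecidableEq n] {A : Matrix n n 𝕜} (hA : A.PosSemidef) : Matrix n n 𝕜 :=
  (hA.1.eigenvectorUnitary : Matrix n n 𝕜) *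
    diagonal (fun i => ((Real.sqrt (hA.1.eigenvalues i) : ℝ) : 𝕜)) *
    (star hA.1.eigenvectorUnitary : Matrix n n 𝕜)

namespace Matrix

section sqrt

variable {𝕜 n : Type*} [RCLike 𝕜] [Fintype n] [DecidableEq n] {A : Matrix n n 𝕜}

lemma PosSemidef.posSemidef_sqrt (hA : A.PosSemidef) : hA.sqrt.PosSemidef := by
  have hD : (diagonal fun i => ((Real.sqrt (hA.1.eigenvalues i) : ℝ) : 𝕜)).PosSemidef :=
    posSemidef_diagonal_iff.mpr fun i => by exact_mod_cast Real.sqrt_nonneg _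
  simpa [PosSemidef.sqrt, star_eq_conjTranspose] using
    hD.mul_mul_conjTranspose_same (hA.1.eigenvectorUnitary : Matrix n n 𝕜)

lemma PosSemidef.sqrt_mul_self (hA : A.PosSemidef) : hA.sqrt * hA.sqrt = A := by
  set U : Matrix n n 𝕜 := (hA.1.eigenvectorUnitary : Matrix n n 𝕜)
  set D : Matrix n n 𝕜 := diagonal fun i => ((Real.sqrt (hA.1.eigenvalues i) : ℝ) : 𝕜)
  have hDD : D * D = diagonal (RCLike.ofReal ∘ hA.1.eigenvalues) := by
    rw [diagonal_mul_diagonal]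
    congr 1
    funext i
    rw [Function.comp_apply, ← RCLike.ofReal_mul, Real.mul_self_sqrt (hA.eigenvalues_nonneg i)]
  have hU : star U * U = 1 := Unitary.coe_star_mul_self _
  calc hA.sqrt * hA.sqrt = U * (D * D) * star U := by
        simp only [PosSemidef.sqrt, U, D, Matrix.mul_assoc]
        rw [← Matrix.mul_assoc (star U) U, hU, Matrix.one_mul]
    _ = A := by rw [hDD]; exact hA.1.spectral_theorem.symm

lemma PosDef.isUnit_sqrt (hA : A.PosDef) : IsUnit hA.posSemidef.sqrt := by
  have h : IsUnit (hA.posSemidef.sqrt.det * hA.posSemidef.sqrt.det) := by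
    rw [← det_mul, hA.posSemidef.sqrt_mul_self, ← isUnit_iff_isUnit_det]
    exact hA.isUnit
  exact (isUnit_iff_isUnit_det _).mpr (IsUnit.mul_iff.mp h).1

end sqrt

variable {R n : Type*} [CommRing R] [Fintype n] [DecidableEq n]

lemma forall_mul_mul_iff_of_isUnit {r : Matrix n n R} (hr : IsUnit r) {P : Matrix n n R → Prop} :
    (∀ b, P (r * b * r)) ↔ ∀ a, P a := by
  have hdet := (isUnit_iff_isUnit_det r).mp hr
  refine ⟨fun h a => ?_, fun h b => h _⟩
  simpa [Matrix.mul_assoc, mul_nonsing_inv_cancel_left _ _ hdet,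
    nonsing_inv_mul_cancel_right _ _ hdet] using h (r⁻¹ * a * r⁻¹)

variable [StarRing R]

lemma inv_conj_sub_conjTranspose_mul_self {s : Matrix n n R} (hs : sᴴ = s) (M N : Matrix n n R) :
    s⁻¹ * M * s⁻¹ - (s⁻¹ * N * s⁻¹)ᴴ * (s⁻¹ * N * s⁻¹) =
      s⁻¹ * (M - Nᴴ * (s * s)⁻¹ * N) * s⁻¹ := by
  rw [mul_inv_rev, conjTranspose_mul, conjTranspose_mul, conjTranspose_nonsing_inv, hs]
  noncomm_ring

lemma conjTranspose_conj_mul_inv_mul_conj {r : Matrix n n R} (hr : IsUnit r) (hr' : rᴴ = r)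
    (b : Matrix n n R) : (r * b * r)ᴴ * (r * r)⁻¹ * (r * b * r) = r * (bᴴ * b) * r := by
  have hdet := (isUnit_iff_isUnit_det r).mp hr
  rw [mul_inv_rev, conjTranspose_mul, conjTranspose_mul, hr']
  simp only [Matrix.mul_assoc, nonsing_inv_mul_cancel_left _ _ hdet,
    mul_nonsing_inv_cancel_left _ _ hdet]

end Matrix

theorem stmt7_general {n m : Type*} [Fintype n] [DecidableEq n] [Fintype m] [DecidableEq m]
    (T : Matrix n n ℂ →ₗ[ℂ] Matrix m m ℂ)
    (ρ : Matrix n n ℂ) (hρ : ρ.PosDef) (hTρ : (T ρ).PosDef)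
    (Tρ : Matrix n n ℂ → Matrix m m ℂ)
    (hTρdef : ∀ b : Matrix n n ℂ,
      Tρ b = (hTρ.posSemidef.sqrt)⁻¹ *
        T (hρ.posSemidef.sqrt * b * hρ.posSemidef.sqrt) * (hTρ.posSemidef.sqrt)⁻¹) :
    (∀ b : Matrix n n ℂ, (Tρ (bᴴ * b) - (Tρ b)ᴴ * (Tρ b)).PosSemidef) ↔
    (∀ a : Matrix n n ℂ, (T (aᴴ * ρ⁻¹ * a) - (T a)ᴴ * (T ρ)⁻¹ * (T a)).PosSemidef) := by
  set r := hρ.posSemidef.sqrt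
  set s := hTρ.posSemidef.sqrt
  have hsH : sᴴ = s := hTρ.posSemidef.posSemidef_sqrt.isHermitian
  have hρ_inv : ρ⁻¹ = (r * r)⁻¹ := by rw [hρ.posSemidef.sqrt_mul_self]
  have hdefect (b : Matrix n n ℂ) : Tρ (bᴴ * b) - (Tρ b)ᴴ * Tρ b =
      star s⁻¹ * (T ((r * b * r)ᴴ * ρ⁻¹ * (r * b * r)) -
        (T (r * b * r))ᴴ * (T ρ)⁻¹ * T (r * b * r)) * s⁻¹ := by
    rw [hTρdef, hTρdef, inv_conj_sub_conjTranspose_mul_self hsH,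
      hTρ.posSemidef.sqrt_mul_self, hρ_inv, conjTranspose_conj_mul_inv_mul_conj hρ.isUnit_sqrt
        hρ.posSemidef.posSemidef_sqrt.isHermitian, star_eq_conjTranspose,
      conjTranspose_nonsing_inv, hsH]
  conv_rhs => rw [← forall_mul_mul_iff_of_isUnit hρ.isUnit_sqrt]
  refine forall_congr' fun b => ?_
  rw [hdefect, (isUnit_nonsing_inv_iff.mpr hTρ.isUnit_sqrt).posSemidef_star_left_conjugate_iff]

/-- For a positive trace-preserving `T` and an invertible density
operator `ρ` with `T ρ` invertible, the map
`Tρ b = T(ρ)^{-1/2} T(ρ^{1/2} b ρ^{1/2}) T(ρ)^{-1/2}` is a Schwarz map iff `T`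
satisfies the generalized Schwarz inequality for `c = ρ`. -/
theorem stmt7 {n m : Type*} [Fintype n] [DecidableEq n] [Fintype m] [DecidableEq m]
    (T : Matrix n n ℂ →ₗ[ℂ] Matrix m m ℂ)
    (hpos : ∀ a : Matrix n n ℂ, a.PosSemidef → (T a).PosSemidef)
    (htp : ∀ a : Matrix n n ℂ, (T a).trace = a.trace)
    (ρ : Matrix n n ℂ) (hρ : ρ.PosDef) (hρ1 : ρ.trace = 1) (hTρ : (T ρ).PosDef)
    (Tρ : Matrix n n ℂ → Matrix m m ℂ)
    (hTρdef : ∀ b : Matrix n n ℂ,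
      Tρ b = (hTρ.posSemidef.sqrt)⁻¹ *
        T (hρ.posSemidef.sqrt * b * hρ.posSemidef.sqrt) * (hTρ.posSemidef.sqrt)⁻¹) :
    (∀ b : Matrix n n ℂ, (Tρ (bᴴ * b) - (Tρ b)ᴴ * (Tρ b)).PosSemidef) ↔
    (∀ a : Matrix n n ℂ, (T (aᴴ * ρ⁻¹ * a) - (T a)ᴴ * (T ρ)⁻¹ * (T a)).PosSemidef) :=
  stmt7_general T ρ hρ hTρ Tρ hTρdef
end

section
/- Let Φ : A → A be a unital Schwarz map and ρ an invertible density operator with Φ*(ρ) = ρ. Then the fixed point set F_Φ = {a ∈ A : Φ(a) = a} is a C*-subalgebra of A, and every a ∈ F_Φ lies in the multiplicative domain of Φ, i.e., Φ(a*a) = Φ(a)*Φ(a) and Φ(aa*) = Φ(a)Φ(a)*. -/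
open Matrix ComplexOrder

/-!
A Schwarz map sends every `yᴴy`, hence every Hermitian matrix, to a Hermitian matrix, so it
commutes with adjoints and its fixed points form a `*`-closed subspace. For a fixed point `a`
the Schwarz defect `Φ(aᴴa) - aᴴa` is positive semidefinite and has zero trace against the
faithful invariant state `ρ`, so it vanishes. Polarization upgrades `Φ(aᴴa) = aᴴa` on this
subspace to `Φ(bᴴa) = bᴴa`, which gives closure under products.
-/

section StarAlgebra

open ComplexStarModule

variable {A B : Type*} [Ring A] [StarRing A] [Algebra ℂ A] [StarModule ℂ A]
  [Ring B] [StarRing B] [Algebra ℂ B] [StarModule ℂ B]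

open Complex in
theorem star_mul_polarization (a b : A) :
    (4 : ℂ) • (star b * a) = star (a + b) * (a + b) - star (a - b) * (a - b)
      + I • (star (a + I • b) * (a + I • b)) - I • (star (a - I • b) * (a - I • b)) := by
  simp only [star_add, star_sub, star_smul, Complex.star_def, conj_I, add_mul, mul_add, sub_mul,
    mul_sub, smul_add, smul_sub, smul_mul_assoc, mul_smul_comm, smul_smul, neg_smul, neg_mul,
    smul_neg]
  match_scalars <;> ring_nf <;> rw [I_sq] <;> norm_num

theorem IsSelfAdjoint.eq_star_mul_self_sub_star_mul_self {h : A} (hh : IsSelfAdjoint h) :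
    h = star ((2⁻¹ : ℂ) • (h + 1)) * ((2⁻¹ : ℂ) • (h + 1))
      - star ((2⁻¹ : ℂ) • (h - 1)) * ((2⁻¹ : ℂ) • (h - 1)) := by
  simp only [star_smul, star_add, star_sub, star_one, hh.star_eq, star_inv₀, star_ofNat,
    smul_mul_smul_comm, add_mul, mul_add, sub_mul, mul_sub, mul_one, one_mul]
  module

theorem LinearMap.map_star_of_isSelfAdjoint_map_star_mul_self {f : A →ₗ[ℂ] B}
    (hf : ∀ y, IsSelfAdjoint (f (star y * y))) (x : A) : f (star x) = star (f x) := by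
  have hsa : ∀ h : A, IsSelfAdjoint h → IsSelfAdjoint (f h) := fun h hh => by
    rw [hh.eq_star_mul_self_sub_star_mul_self, map_sub]
    exact (hf _).sub (hf _)
  rw [← realPart_add_I_smul_imaginaryPart x]
  simp only [star_add, star_smul, map_add, map_smul, (hsa _ (ℜ x).2).star_eq,
    (hsa _ (ℑ x).2).star_eq, selfAdjoint.star_val_eq]

theorem LinearMap.map_star_mul_of_map_eq {f : A →ₗ[ℂ] A}
    (hf : ∀ a, f a = a → f (star a * a) = star a * a) {a b : A} (ha : f a = a) (hb : f b = b) :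
    f (star b * a) = star b * a := by
  apply smul_right_injective A (by norm_num : (4 : ℂ) ≠ 0)
  have h₁ := hf (a + b) (by rw [map_add, ha, hb])
  have h₂ := hf (a - b) (by rw [map_sub, ha, hb])
  have h₃ := hf (a + Complex.I • b) (by rw [map_add, map_smul, ha, hb])
  have h₄ := hf (a - Complex.I • b) (by rw [map_sub, map_smul, ha, hb])
  dsimp only
  rw [← map_smul, star_mul_polarization, map_sub, map_add, map_sub, map_smul, map_smul,
    h₁, h₂, h₃, h₄]

end StarAlgebra

theorem Matrix.PosSemidef.eq_zero_of_trace_posDef_mul_eq_zero {𝕜 n : Type*} [RCLike 𝕜]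
    [Fintype n] [DecidableEq n] {M ρ : Matrix n n 𝕜} (hM : M.PosSemidef) (hρ : ρ.PosDef)
    (h : (ρ * M).trace = 0) : M = 0 := by
  open scoped MatrixOrder in
  obtain ⟨y, hy, rfl⟩ :=
    CStarAlgebra.isStrictlyPositive_iff_eq_star_mul_self.mp hρ.isStrictlyPositive
  rwa [trace_mul_cycle, trace_mul_cycle, star_eq_conjTranspose,
    (hM.mul_mul_conjTranspose_same y).trace_eq_zero_iff, ← star_eq_conjTranspose,
    hy.star.mul_left_eq_zero, hy.mul_right_eq_zero] at h

theorem map_conjTranspose_mul_self_of_map_eq {𝕜 n : Type*} [RCLike 𝕜] [Fintype n] [DecidableEq n]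
    {Φ : Matrix n n 𝕜 →ₗ[𝕜] Matrix n n 𝕜} {ρ a : Matrix n n 𝕜}
    (hschwarz : (Φ (aᴴ * a) - (Φ a)ᴴ * Φ a).PosSemidef) (hρ : ρ.PosDef)
    (hinv : ∀ x, (ρ * Φ x).trace = (ρ * x).trace) (ha : Φ a = a) :
    Φ (aᴴ * a) = aᴴ * a := by
  rw [ha] at hschwarz
  refine sub_eq_zero.mp (hschwarz.eq_zero_of_trace_posDef_mul_eq_zero hρ ?_)
  rw [mul_sub, trace_sub, hinv, sub_self]

theorem stmt10_general {n : Type*} [Fintype n] [DecidableEq n]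
    (Φ : Matrix n n ℂ →ₗ[ℂ] Matrix n n ℂ)
    (hschwarz : ∀ a : Matrix n n ℂ, (Φ (aᴴ * a) - (Φ a)ᴴ * Φ a).PosSemidef)
    (ρ : Matrix n n ℂ) (hρ : ρ.PosDef)
    (hinv : ∀ a : Matrix n n ℂ, (ρ * Φ a).trace = (ρ * a).trace) :
    (∀ a b : Matrix n n ℂ, Φ a = a → Φ b = b → Φ (a * b) = a * b) ∧
    (∀ a : Matrix n n ℂ, Φ a = a → Φ aᴴ = aᴴ) ∧
    (∀ a : Matrix n n ℂ, Φ a = a →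
      Φ (aᴴ * a) = (Φ a)ᴴ * Φ a ∧ Φ (a * aᴴ) = Φ a * (Φ a)ᴴ) := by
  have hstar : ∀ x, Φ xᴴ = (Φ x)ᴴ :=
    Φ.map_star_of_isSelfAdjoint_map_star_mul_self fun y => isHermitian_iff_isSelfAdjoint.mp <| by
      simpa [star_eq_conjTranspose] using
        (hschwarz y).isHermitian.add (isHermitian_conjTranspose_mul_self (Φ y))
  have hfix : ∀ a, Φ a = a → Φ (aᴴ * a) = aᴴ * a := fun a =>
    map_conjTranspose_mul_self_of_map_eq (hschwarz a) hρ hinv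
  have hfix_star : ∀ a, Φ a = a → Φ aᴴ = aᴴ := fun a ha => by rw [hstar, ha]
  refine ⟨fun a b ha hb => ?_, hfix_star, fun a ha => ⟨by rw [ha, hfix a ha], ?_⟩⟩
  · simpa [star_eq_conjTranspose] using Φ.map_star_mul_of_map_eq hfix hb (hfix_star a ha)
  · simpa [ha] using hfix aᴴ (hfix_star a ha)

/-- Let `Φ` be a unital Schwarz map on a matrix algebra and `ρ` an
invertible density operator with `Φ* ρ = ρ` (i.e. `Tr(ρ Φ(a)) = Tr(ρ a)` for all
`a`). Then the fixed-point set of `Φ` is a C*-subalgebra (closed under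
multiplication and adjoints; it contains `1` and is a linear subspace since `Φ`
is unital and linear), and every fixed point lies in the multiplicative domain
of `Φ`. -/
theorem stmt10 {n : Type*} [Fintype n] [DecidableEq n]
    (Φ : Matrix n n ℂ →ₗ[ℂ] Matrix n n ℂ)
    (hunital : Φ 1 = 1)
    (hschwarz : ∀ a : Matrix n n ℂ, (Φ (aᴴ * a) - (Φ a)ᴴ * Φ a).PosSemidef)
    (ρ : Matrix n n ℂ) (hρ : ρ.PosDef) (hρ1 : ρ.trace = 1)
    (hinv : ∀ a : Matrix n n ℂ, (ρ * Φ a).trace = (ρ * a).trace) :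
    (∀ a b : Matrix n n ℂ, Φ a = a → Φ b = b → Φ (a * b) = a * b) ∧
    (∀ a : Matrix n n ℂ, Φ a = a → Φ aᴴ = aᴴ) ∧
    (∀ a : Matrix n n ℂ, Φ a = a →
      Φ (aᴴ * a) = (Φ a)ᴴ * Φ a ∧ Φ (a * aᴴ) = Φ a * (Φ a)ᴴ) :=
  stmt10_general Φ hschwarz ρ hρ hinv
end

section
/- Let Φ : A → B be a unital Schwarz map. Then M_Φ = {a ∈ A : Φ(a*a) = Φ(a)*Φ(a) and Φ(aa*) = Φ(a)Φ(a)*} equals {a ∈ A : Φ(ab) = Φ(a)Φ(b) and Φ(ba) = Φ(b)Φ(a) for all b ∈ A}; in particular M_Φ is a C*-subalgebra of A and Φ restricted to M_Φ is a *-homomorphism. -/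
/-! For a Schwarz map the defect `D(a, b) = Φ(a⋆b) - Φ(a)ᴴΦ(b)` expands as
`D(ca + b, ca + b) = |c|² D(a, a) + c̄ D(a, b) + c D(b, a) + D(b, b) ≥ 0`. When `D(a, a) = 0`,
letting `c` run over `ℝ` and over `iℝ` forces `D(a, b) = D(b, a) = 0` for every `b`.
For `a = 1` this says that `Φ` preserves adjoints; with that, the two identities defining `M_Φ`
become left and right multiplicativity of `Φ` at `a`, and the set of points of two-sided
multiplicativity is closed under products and, `Φ` being ⋆-preserving, under adjoints. -/

open Matrix ComplexOrder

lemma eq_zero_of_forall_le_add_mul {a b : ℝ} (h : ∀ t : ℝ, 0 ≤ a + t * b) : b = 0 := by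
  by_contra hb
  have := h (-(a + 1) / b)
  rw [div_mul_cancel₀ _ hb] at this
  linarith

open scoped MatrixOrder in
lemma Matrix.eq_zero_of_forall_posSemidef_add_smul {𝕜 n : Type*} [RCLike 𝕜] [Fintype n]
    {P Q : Matrix n n 𝕜} (h : ∀ t : ℝ, (P + (t : 𝕜) • Q).PosSemidef) : Q = 0 := by
  have hQ : Q.IsHermitian := by
    simpa using (h 1).isHermitian.sub (h 0).isHermitian
  have hform (v : n → 𝕜) : star v ⬝ᵥ (Q *ᵥ v) = 0 := by
    refine RCLike.ext ?_ (by simpa using hQ.im_star_dotProduct_mulVec_self v)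
    rw [map_zero]
    refine eq_zero_of_forall_le_add_mul (a := RCLike.re (star v ⬝ᵥ (P *ᵥ v))) fun t => ?_
    simpa [add_mulVec, smul_mulVec, RCLike.smul_re] using (h t).re_dotProduct_nonneg v
  refine le_antisymm ?_ ?_
  · rw [le_iff, zero_sub]
    exact .of_dotProduct_mulVec_nonneg hQ.neg fun v => by simp [neg_mulVec, hform]
  · exact nonneg_iff_posSemidef.mpr (.of_dotProduct_mulVec_nonneg hQ fun v => by rw [hform])

def multiplicativeDomain {A B : Type*} [Mul A] [Mul B] (f : A → B) : Set A :=
  {a | ∀ b, f (a * b) = f a * f b ∧ f (b * a) = f b * f a}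

section multiplicativeDomain

variable {A B : Type*} {f : A → B} {a b : A}

lemma mul_mem_multiplicativeDomain [Semigroup A] [Semigroup B] (ha : a ∈ multiplicativeDomain f)
    (hb : b ∈ multiplicativeDomain f) : a * b ∈ multiplicativeDomain f := fun c =>
  ⟨by rw [mul_assoc, (ha _).1, (hb _).1, (ha _).1, mul_assoc],
    by rw [← mul_assoc, (hb _).2, (ha _).2, (hb _).2, mul_assoc]⟩

lemma star_mem_multiplicativeDomain [Mul A] [StarMul A] [Mul B] [StarMul B]
    (hf : ∀ x, f (star x) = star (f x)) (ha : a ∈ multiplicativeDomain f) :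
    star a ∈ multiplicativeDomain f := fun c =>
  ⟨by rw [← star_star c, ← star_mul, hf, (ha _).2, star_mul, ← hf, ← hf],
    by rw [← star_star c, ← star_mul, hf, (ha _).1, star_mul, ← hf, ← hf]⟩

end multiplicativeDomain

section SchwarzMap

variable {A m : Type*} [Ring A] [StarRing A] [Algebra ℂ A] [StarModule ℂ A] [Fintype m]
  (Φ : A →ₗ[ℂ] Matrix m m ℂ)

def schwarzDefect (a b : A) : Matrix m m ℂ := Φ (star a * b) - (Φ a)ᴴ * Φ b

lemma schwarzDefect_smul_add_self (c : ℂ) (a b : A) :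
    schwarzDefect Φ (c • a + b) (c • a + b) =
      (star c * c) • schwarzDefect Φ a a + star c • schwarzDefect Φ a b +
        c • schwarzDefect Φ b a + schwarzDefect Φ b b := by
  simp only [schwarzDefect, star_add, star_smul, add_mul, mul_add, smul_mul_assoc, mul_smul_comm,
    map_add, map_smul, conjTranspose_add, conjTranspose_smul]
  module

variable {Φ}

theorem schwarzDefect_eq_zero_of_self (hΦ : ∀ a, (schwarzDefect Φ a a).PosSemidef) {a : A}
    (ha : schwarzDefect Φ a a = 0) (b : A) :
    schwarzDefect Φ a b = 0 ∧ schwarzDefect Φ b a = 0 := by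
  have hre (t : ℝ) : (schwarzDefect Φ b b +
      (t : ℂ) • (schwarzDefect Φ a b + schwarzDefect Φ b a)).PosSemidef := by
    convert hΦ ((t : ℂ) • a + b) using 1
    rw [schwarzDefect_smul_add_self, ha, Complex.star_def, Complex.conj_ofReal]
    module
  have him (t : ℝ) : (schwarzDefect Φ b b +
      (t : ℂ) • (Complex.I • (schwarzDefect Φ b a - schwarzDefect Φ a b))).PosSemidef := by
    convert hΦ ((Complex.I * t) • a + b) using 1
    rw [schwarzDefect_smul_add_self, ha, Complex.star_def, map_mul, Complex.conj_I,
      Complex.conj_ofReal]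
    module
  have hsum := eq_zero_of_forall_posSemidef_add_smul hre
  have hdiff := eq_zero_of_forall_posSemidef_add_smul him
  rw [smul_eq_zero, or_iff_right Complex.I_ne_zero] at hdiff
  constructor
  · linear_combination (norm := module) (1/2 : ℂ) • hsum - (1/2 : ℂ) • hdiff
  · linear_combination (norm := module) (1/2 : ℂ) • hsum + (1/2 : ℂ) • hdiff

theorem map_star_of_map_one [DecidableEq m] (hΦ : ∀ a, (schwarzDefect Φ a a).PosSemidef)
    (h1 : Φ 1 = 1) (a : A) : Φ (star a) = (Φ a)ᴴ := by
  have h11 : schwarzDefect Φ 1 1 = 0 := by simp [schwarzDefect, h1]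
  simpa [schwarzDefect, h1, sub_eq_zero] using (schwarzDefect_eq_zero_of_self hΦ h11 a).2

theorem mem_multiplicativeDomain_iff [DecidableEq m]
    (hΦ : ∀ a, (schwarzDefect Φ a a).PosSemidef) (h1 : Φ 1 = 1) {a : A} :
    a ∈ multiplicativeDomain Φ ↔
      Φ (star a * a) = (Φ a)ᴴ * Φ a ∧ Φ (a * star a) = Φ a * (Φ a)ᴴ := by
  have hstar := map_star_of_map_one hΦ h1
  refine ⟨fun ha => ⟨?_, ?_⟩, fun ⟨ha, ha'⟩ b => ⟨?_, ?_⟩⟩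
  · rw [(ha (star a)).2, hstar]
  · rw [(ha (star a)).1, hstar]
  · have hsa : schwarzDefect Φ (star a) (star a) = 0 := by
      rw [schwarzDefect, star_star, ha', hstar, conjTranspose_conjTranspose, sub_self]
    simpa [schwarzDefect, hstar, sub_eq_zero] using (schwarzDefect_eq_zero_of_self hΦ hsa b).1
  · simpa [schwarzDefect, hstar, sub_eq_zero] using
      (schwarzDefect_eq_zero_of_self hΦ (sub_eq_zero.mpr ha) (star b)).2

end SchwarzMap

/-- For a unital Schwarz map `Φ`, the multiplicative domain
`M_Φ = {a : Φ(aᴴa) = Φ(a)ᴴΦ(a) and Φ(aaᴴ) = Φ(a)Φ(a)ᴴ}` coincides with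
`{a : Φ(ab) = Φ(a)Φ(b) and Φ(ba) = Φ(b)Φ(a) for all b}`; in particular it is
a C*-subalgebra (closed under multiplication and adjoints) and `Φ` restricted
to it is a *-homomorphism. -/
theorem stmt11 {n m : Type*} [Fintype n] [DecidableEq n] [Fintype m] [DecidableEq m]
    (Φ : Matrix n n ℂ →ₗ[ℂ] Matrix m m ℂ)
    (hunital : Φ 1 = 1)
    (hschwarz : ∀ a : Matrix n n ℂ, (Φ (aᴴ * a) - (Φ a)ᴴ * Φ a).PosSemidef) :
    (∀ a : Matrix n n ℂ,
      (Φ (aᴴ * a) = (Φ a)ᴴ * Φ a ∧ Φ (a * aᴴ) = Φ a * (Φ a)ᴴ) ↔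
      (∀ b : Matrix n n ℂ, Φ (a * b) = Φ a * Φ b ∧ Φ (b * a) = Φ b * Φ a)) ∧
    (∀ a b : Matrix n n ℂ,
      (Φ (aᴴ * a) = (Φ a)ᴴ * Φ a ∧ Φ (a * aᴴ) = Φ a * (Φ a)ᴴ) →
      (Φ (bᴴ * b) = (Φ b)ᴴ * Φ b ∧ Φ (b * bᴴ) = Φ b * (Φ b)ᴴ) →
      (Φ ((a * b)ᴴ * (a * b)) = (Φ (a * b))ᴴ * Φ (a * b) ∧
        Φ ((a * b) * (a * b)ᴴ) = Φ (a * b) * (Φ (a * b))ᴴ)) ∧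
    (∀ a : Matrix n n ℂ,
      (Φ (aᴴ * a) = (Φ a)ᴴ * Φ a ∧ Φ (a * aᴴ) = Φ a * (Φ a)ᴴ) →
      ((Φ ((aᴴ)ᴴ * aᴴ) = (Φ aᴴ)ᴴ * Φ aᴴ ∧ Φ (aᴴ * (aᴴ)ᴴ) = Φ aᴴ * (Φ aᴴ)ᴴ) ∧
        Φ aᴴ = (Φ a)ᴴ)) := by
  have hmem a := mem_multiplicativeDomain_iff (Φ := Φ) hschwarz hunital (a := a)
  have hstar := map_star_of_map_one (Φ := Φ) hschwarz hunital
  refine ⟨fun a => (hmem a).symm, fun a b ha hb => ?_, fun a ha => ⟨?_, hstar a⟩⟩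
  · exact (hmem _).1 (mul_mem_multiplicativeDomain ((hmem a).2 ha) ((hmem b).2 hb))
  · exact (hmem _).1 (star_mem_multiplicativeDomain hstar ((hmem a).2 ha))
end

section
/- Quantum Neyman–Pearson: let σ, ρ be density operators, t ≥ 0, let P_+ = supp (σ − tρ)_+ (the projection onto the span of eigenvectors of σ − tρ with positive eigenvalue) and P₀ the projection onto the kernel of σ − tρ. Then an operator M with 0 ≤ M ≤ I maximizes Tr((σ − tρ)M) over all 0 ≤ M ≤ I if and only if M = P_+ + X with 0 ≤ X ≤ P₀. Moreover, max_{0 ≤ M ≤ I} Tr((σ − tρ)M) = Tr((σ − tρ)_+) = ½(Tr(σ − tρ) + ‖σ − tρ‖₁). -/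
/-! Write `Q = 1 - P₊ - P₀`. As `a P₀ = 0`, `a = a P₊ - (-a Q)` is a difference of two positive
semidefinite matrices, and for `0 ≤ M ≤ 1`
`Tr (a P₊) - Tr (a M) = Tr (a P₊ (1 - M)) + Tr ((-a Q) M)`.
Both terms are traces of products of positive semidefinite matrices, hence nonnegative, and vanish
exactly when the products vanish. Since the kernel of `a` is the range of `P₀`, `a P₊ (1 - M) = 0`
and `a Q M = 0` force `P₊ M = P₊` and `Q M = 0`, i.e. `M = P₊ + P₀ M` with `0 ≤ P₀ M ≤ P₀`.
Finally `a P₊ · (-a Q) = 0`, so by uniqueness of the decomposition into positive and negative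
parts `a P₊ = a⁺`, whose trace is `∑ λᵢ⁺ = (Tr a + ∑ |λᵢ|) / 2`. -/

open Matrix ComplexOrder
open scoped MatrixOrder

namespace Matrix

variable {n 𝕜 : Type*} [Fintype n] [RCLike 𝕜]

lemma IsHermitian.posSemidef_of_mul_self_eq {P : Matrix n n 𝕜} (hP : P.IsHermitian)
    (hPP : P * P = P) : P.PosSemidef := by
  simpa only [hP.eq, hPP] using posSemidef_conjTranspose_mul_self P

lemma trace_sub_trace_sub_mul [DecidableEq n] (A B M : Matrix n n 𝕜) :
    A.trace - ((A - B) * M).trace = (A * (1 - M)).trace + (B * M).trace := by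
  simp only [sub_mul, mul_sub, Matrix.mul_one, trace_sub]
  ring

namespace PosSemidef

variable {A B : Matrix n n 𝕜}

lemma trace_mul_nonneg_s17 (hA : A.PosSemidef) (hB : B.PosSemidef) : 0 ≤ (A * B).trace := by
  classical
  obtain ⟨C, rfl⟩ := CStarAlgebra.nonneg_iff_eq_star_mul_self.mp hA.nonneg
  rw [star_eq_conjTranspose, ← trace_mul_cycle]
  exact (hB.mul_mul_conjTranspose_same C).trace_nonneg

lemma trace_mul_eq_zero_iff (hA : A.PosSemidef) (hB : B.PosSemidef) :
    (A * B).trace = 0 ↔ A * B = 0 := by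
  classical
  refine ⟨fun h ↦ ?_, fun h ↦ by rw [h, trace_zero]⟩
  obtain ⟨C, rfl⟩ := CStarAlgebra.nonneg_iff_eq_star_mul_self.mp hA.nonneg
  obtain ⟨D, rfl⟩ := CStarAlgebra.nonneg_iff_eq_star_mul_self.mp hB.nonneg
  simp only [star_eq_conjTranspose] at h ⊢
  have hCD : C * Dᴴ = 0 := by
    rw [← trace_conjTranspose_mul_self_eq_zero_iff, ← h, conjTranspose_mul,
      conjTranspose_conjTranspose]
    simp only [Matrix.mul_assoc]
    rw [trace_mul_comm D]
    simp only [Matrix.mul_assoc]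
  rw [Matrix.mul_assoc, ← Matrix.mul_assoc C, hCD, Matrix.zero_mul, Matrix.mul_zero]

lemma mul_eq_right_of_le_projection {P X : Matrix n n 𝕜} (hP : P.IsHermitian) (hPP : P * P = P)
    (hX : X.PosSemidef) (hPX : (P - X).PosSemidef) : P * X = X := by
  classical
  have hYH : (1 - P).IsHermitian := isHermitian_one.sub hP
  have hY : (1 - P).PosSemidef := hYH.posSemidef_of_mul_self_eq (by simp [sub_mul, mul_sub, hPP])
  have h1 := hX.trace_mul_nonneg_s17 hY
  have h2 := hPX.trace_mul_nonneg_s17 hY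
  rw [sub_mul, mul_sub, Matrix.mul_one, hPP, sub_self, zero_sub, trace_neg, neg_nonneg] at h2
  have hXY := congrArg (·ᴴ) ((hX.trace_mul_eq_zero_iff hY).1 (le_antisymm h2 h1))
  simp only [conjTranspose_mul, hX.isHermitian.eq, hYH.eq, conjTranspose_zero, sub_mul,
    Matrix.one_mul, sub_eq_zero] at hXY
  exact hXY.symm

section

variable [DecidableEq n] {M : Matrix n n 𝕜}

lemma trace_sub_mul_le_trace (hA : A.PosSemidef) (hB : B.PosSemidef) (hM : M.PosSemidef)
    (hM1 : (1 - M).PosSemidef) : ((A - B) * M).trace ≤ A.trace := by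
  rw [← sub_nonneg, trace_sub_trace_sub_mul]
  exact add_nonneg (hA.trace_mul_nonneg_s17 hM1) (hB.trace_mul_nonneg_s17 hM)

lemma trace_sub_mul_eq_trace_iff (hA : A.PosSemidef) (hB : B.PosSemidef) (hM : M.PosSemidef)
    (hM1 : (1 - M).PosSemidef) :
    ((A - B) * M).trace = A.trace ↔ A * (1 - M) = 0 ∧ B * M = 0 := by
  rw [eq_comm, ← sub_eq_zero, trace_sub_trace_sub_mul,
    add_eq_zero_iff_of_nonneg (hA.trace_mul_nonneg_s17 hM1) (hB.trace_mul_nonneg_s17 hM),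
    hA.trace_mul_eq_zero_iff hM1, hB.trace_mul_eq_zero_iff hM]

end

end PosSemidef

lemma IsHermitian.trace_posPart [DecidableEq n] {a : Matrix n n 𝕜} (ha : a.IsHermitian) :
    (a⁺).trace = ∑ i, (((ha.eigenvalues i)⁺ : ℝ) : 𝕜) := by
  rw [CFC.posPart_def, cfcₙ_eq_cfc, ha.cfc_eq, IsHermitian.cfc, Unitary.conjStarAlgAut_apply,
    trace_mul_cycle, Unitary.coe_star_mul_self, Matrix.one_mul, trace_diagonal]
  rfl

section Kernel

variable {a P₀ : Matrix n n 𝕜}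

lemma mul_eq_zero_iff_of_ker (hker : ∀ x, a *ᵥ x = 0 ↔ P₀ *ᵥ x = x) (B : Matrix n n 𝕜) :
    a * B = 0 ↔ P₀ * B = B := by
  simp only [ext_iff_mulVec, ← mulVec_mulVec, zero_mulVec, hker]

lemma mul_eq_zero_of_ker (hker : ∀ x, a *ᵥ x = 0 ↔ P₀ *ᵥ x = x) {E B : Matrix n n 𝕜}
    (hE : E * E = E) (hEP₀ : E * P₀ = 0) (h : a * (E * B) = 0) : E * B = 0 :=
  calc E * B = E * (P₀ * (E * B)) := by
        rw [(mul_eq_zero_iff_of_ker hker _).1 h, ← Matrix.mul_assoc, hE]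
    _ = 0 := by rw [← Matrix.mul_assoc, hEP₀, Matrix.zero_mul]

variable [DecidableEq n] {P : Matrix n n 𝕜}

lemma exists_eq_add_of_mul_eq_zero {M : Matrix n n 𝕜} (hP : P.IsHermitian) (hPP : P * P = P)
    (hP₀ : P₀.IsHermitian) (hP₀P₀ : P₀ * P₀ = P₀) (horth : P * P₀ = 0)
    (hker : ∀ x, a *ᵥ x = 0 ↔ P₀ *ᵥ x = x) (hM : M.PosSemidef) (hM1 : (1 - M).PosSemidef)
    (hPM : a * P * (1 - M) = 0) (hQM : -(a * (1 - P - P₀)) * M = 0) :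
    ∃ X, X.PosSemidef ∧ (P₀ - X).PosSemidef ∧ M = P + X := by
  have hP₀P : P₀ * P = 0 := by simpa [hP.eq, hP₀.eq] using congrArg (·ᴴ) horth
  have hPM' : P * (1 - M) = 0 :=
    mul_eq_zero_of_ker hker hPP horth (by rw [← Matrix.mul_assoc, hPM])
  have hQM' : (1 - P - P₀) * M = 0 := by
    refine mul_eq_zero_of_ker hker ?_ ?_ ?_
    · simp only [sub_mul, mul_sub, Matrix.one_mul, Matrix.mul_one, hPP, hP₀P₀, horth, hP₀P]
      abel
    · simp only [sub_mul, Matrix.one_mul, horth, hP₀P₀, sub_zero, sub_self]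
    · rw [← Matrix.mul_assoc, ← neg_eq_zero, ← Matrix.neg_mul, hQM]
  have hMeq : M = P + P₀ * M := by
    rw [mul_sub, Matrix.mul_one, sub_eq_zero] at hPM'
    rw [sub_mul, sub_mul, Matrix.one_mul, sub_eq_zero, sub_eq_iff_eq_add, ← hPM'] at hQM'
    exact hQM'.trans (add_comm _ _)
  have hXH : (P₀ * M)ᴴ = P₀ * M := by
    rw [eq_sub_of_add_eq' hMeq.symm, conjTranspose_sub, hM.isHermitian.eq, hP.eq]
  have hMP₀ : M * P₀ = P₀ * M := by
    rwa [conjTranspose_mul, hM.isHermitian.eq, hP₀.eq] at hXH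
  have hX : P₀ * M * P₀ = P₀ * M := by
    rw [Matrix.mul_assoc, hMP₀, ← Matrix.mul_assoc, hP₀P₀]
  refine ⟨P₀ * M, ?_, ?_, hMeq⟩
  · simpa only [hP₀.eq, hX] using hM.conjTranspose_mul_mul_same P₀
  · simpa only [hP₀.eq, mul_sub, sub_mul, Matrix.mul_one, hP₀P₀, hX]
      using hM1.conjTranspose_mul_mul_same P₀

lemma IsHermitian.posPart_eq_mul (ha : a.IsHermitian) (hP : P.IsHermitian) (hPP : P * P = P)
    (horth : P * P₀ = 0) (haP₀ : a * P₀ = 0) (hpos : (a * P).PosSemidef)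
    (hneg : (-(a * (1 - P - P₀))).PosSemidef) : a⁺ = a * P := by
  have hPa : P * a = a * P := by simpa [hP.eq, ha.eq] using hpos.isHermitian.eq
  have hPQ : P * (1 - P - P₀) = 0 := by simp only [mul_sub, Matrix.mul_one, hPP, horth, sub_self]
  refine (CFC.posPart_negPart_unique ?_ ?_ hpos.nonneg hneg.nonneg).1
  · rw [sub_neg_eq_add, mul_sub, mul_sub, Matrix.mul_one, haP₀, sub_zero, add_sub_cancel]
  · rw [Matrix.mul_neg, Matrix.mul_assoc, ← Matrix.mul_assoc P, hPa, Matrix.mul_assoc, hPQ,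
      Matrix.mul_zero, Matrix.mul_zero, neg_zero]

end Kernel

end Matrix

theorem stmt17_general {N : Type*} [Fintype N] [DecidableEq N]
    (a : Matrix N N ℂ) (ha : a.IsHermitian)
    (Pplus P₀ : Matrix N N ℂ)
    (hP1 : Pplus.IsHermitian) (hP2 : Pplus * Pplus = Pplus)
    (h01 : P₀.IsHermitian) (h02 : P₀ * P₀ = P₀)
    (horth : Pplus * P₀ = 0)
    (hker : ∀ x : N → ℂ, a.mulVec x = 0 ↔ P₀.mulVec x = x)
    (hposP : (a * Pplus).PosSemidef)
    (hneg : (-(a * (1 - Pplus - P₀))).PosSemidef) :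
    (∀ M : Matrix N N ℂ, M.PosSemidef → ((1 : Matrix N N ℂ) - M).PosSemidef →
      ((a * M).trace).re ≤ ((a * Pplus).trace).re) ∧
    (∀ M : Matrix N N ℂ, M.PosSemidef → ((1 : Matrix N N ℂ) - M).PosSemidef →
      ((a * M).trace = (a * Pplus).trace ↔
        ∃ X : Matrix N N ℂ, X.PosSemidef ∧ (P₀ - X).PosSemidef ∧ M = Pplus + X)) ∧
    ((a * Pplus).trace).re = (a.trace.re + ∑ i, |ha.eigenvalues i|) / 2 := by
  have haP₀ : a * P₀ = 0 := (mul_eq_zero_iff_of_ker hker P₀).2 h02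
  have hdecomp : a * Pplus - -(a * (1 - Pplus - P₀)) = a := by
    rw [sub_neg_eq_add, mul_sub, mul_sub, Matrix.mul_one, haP₀, sub_zero, add_sub_cancel]
  refine ⟨fun M hM hM1 ↦ ?_, fun M hM hM1 ↦ ⟨fun h ↦ ?_, ?_⟩, ?_⟩
  · have hle := hposP.trace_sub_mul_le_trace hneg hM hM1
    rw [hdecomp] at hle
    exact Complex.re_le_re hle
  · obtain ⟨hPM, hQM⟩ := (hposP.trace_sub_mul_eq_trace_iff hneg hM hM1).1 (by rwa [hdecomp])
    exact exists_eq_add_of_mul_eq_zero hP1 hP2 h01 h02 horth hker hM hM1 hPM hQM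
  · rintro ⟨X, hX, hP₀X, rfl⟩
    rw [mul_add, trace_add,
      (mul_eq_zero_iff_of_ker hker X).2 (hX.mul_eq_right_of_le_projection h01 h02 hP₀X),
      trace_zero, add_zero]
  · rw [← ha.posPart_eq_mul hP1 hP2 horth haP₀ hposP hneg, ha.trace_posPart,
      ha.trace_eq_sum_eigenvalues]
    simp only [Complex.coe_algebraMap, Complex.re_sum, Complex.ofReal_re]
    rw [← Finset.sum_add_distrib, Finset.sum_div]
    refine Finset.sum_congr rfl fun i _ ↦ ?_
    linarith [posPart_add_negPart (ha.eigenvalues i), posPart_sub_negPart (ha.eigenvalues i)]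

/-- quantum Neyman–Pearson lemma: Let `σ, ρ` be density matrices,
`t ≥ 0`, `a = σ - tρ`, `Pplus = supp a₊` (projection onto the positive spectral
part of `a`) and `P₀` the projection onto the kernel of `a`. Then `0 ≤ M ≤ 1`
maximizes `Tr(aM)` iff `M = Pplus + X` with `0 ≤ X ≤ P₀`, and the maximum is
`Tr(a₊) = ½(Tr a + ‖a‖₁)`, where `‖a‖₁` is the sum of the absolute values of
the eigenvalues of `a`. -/
theorem stmt17 {N : Type*} [Fintype N] [DecidableEq N]
    (σ ρ : Matrix N N ℂ) (hσ : σ.PosSemidef) (hσ1 : σ.trace = 1)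
    (hρ : ρ.PosSemidef) (hρ1 : ρ.trace = 1)
    (t : ℝ) (ht : 0 ≤ t)
    (a : Matrix N N ℂ) (hadef : a = σ - (t : ℂ) • ρ) (ha : a.IsHermitian)
    (Pplus P₀ : Matrix N N ℂ)
    (hP1 : Pplus.IsHermitian) (hP2 : Pplus * Pplus = Pplus)
    (h01 : P₀.IsHermitian) (h02 : P₀ * P₀ = P₀)
    (horth : Pplus * P₀ = 0)
    (hker : ∀ x : N → ℂ, a.mulVec x = 0 ↔ P₀.mulVec x = x)
    (hcomm : a * Pplus = Pplus * a)
    (hposP : (a * Pplus).PosSemidef)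
    (haP0 : a * P₀ = 0)
    (hneg : (-(a * (1 - Pplus - P₀))).PosSemidef) :
    (∀ M : Matrix N N ℂ, M.PosSemidef → ((1 : Matrix N N ℂ) - M).PosSemidef →
      ((a * M).trace).re ≤ ((a * Pplus).trace).re) ∧
    (∀ M : Matrix N N ℂ, M.PosSemidef → ((1 : Matrix N N ℂ) - M).PosSemidef →
      ((a * M).trace = (a * Pplus).trace ↔
        ∃ X : Matrix N N ℂ, X.PosSemidef ∧ (P₀ - X).PosSemidef ∧ M = Pplus + X)) ∧
    ((a * Pplus).trace).re = (a.trace.re + ∑ i, |ha.eigenvalues i|) / 2 :=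
  stmt17_general a ha Pplus P₀ hP1 hP2 h01 h02 horth hker hposP hneg
end
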